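/- Let n ≥ 1 and p ≥ 1 be integers, let σ ≥ 0, and let ξ₁, …, ξ_p ∈ ℝⁿ satisfy |ξ₁| ≥ |ξ₂| ≥ ⋯ ≥ |ξ_p|, with ξ = Σ_{j=1}^p ξ_j. Then | 1 − cosh(σ|ξ|) · ∏_{j=1}^p sech(σ|ξ_j|) | ≤ p² · 2^p · σ² · |ξ₁| |ξ₂|. -/

import Mathlib

/-!
Put `a j = σ‖ξ j‖`, `s = σ‖∑ j, ξ j‖` and `X = cosh s / ∏ j, cosh (a j)`. Everything rests on
`sinh x * sinh y ≤ x * y * cosh x * cosh y` for `x, y ≥ 0` (termwise comparison of power series),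
i.e. `cosh (x ± y) = cosh x * cosh y * (1 ± ε)` with `0 ≤ ε ≤ x * y`.

Adding the `a j` one at a time gives `X ≤ exp (∑_{i<j} a i * a j)`, and `cosh s ≤ exp (∑ a j)
≤ 2 ^ p * ∏ cosh (a j)` gives `X ≤ 2 ^ p`; together they bound `X - 1` by `2 ^ p ∑_{i<j} a i * a j`.
For `1 - X`, let `b = ∑_{j ≥ 1} a j`, so that `|s| ≥ a 0 - b`. If `b ≤ a 0` then
`cosh s ≥ cosh (a 0 - b)`, and `1 - X ≤ a 0 * b` by the identity above; otherwise
`1 - X ≤ log ∏ cosh (a j) ≤ ∑ (a j) ^ 2 / 2 ≤ a 0 * b`. The ordering bounds every product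
`a i * a j` with `i < j` by `a 0 * a 1`.
-/

open Finset

theorem norm_le_norm_sum_range_add_sum_Ico {E : Type*} [SeminormedAddCommGroup E] {p : ℕ}
    (hp : 1 ≤ p) (f : ℕ → E) :
    ‖f 0‖ ≤ ‖∑ j ∈ range p, f j‖ + ∑ j ∈ Ico 1 p, ‖f j‖ := by
  have hf : f 0 = ∑ j ∈ range p, f j - ∑ j ∈ Ico 1 p, f j := by
    rw [range_eq_Ico, sum_eq_sum_Ico_succ_bot hp, add_sub_cancel_right]
  rw [hf]
  exact (norm_sub_le _ _).trans (by gcongr; exact norm_sum_le _ _)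

namespace Real

theorem sinh_le_mul_cosh {x : ℝ} (hx : 0 ≤ x) : sinh x ≤ x * cosh x := by
  refine hasSum_le (fun n ↦ ?_) (hasSum_sinh x) ((hasSum_cosh x).mul_left x)
  rw [pow_succ', mul_div_assoc]
  gcongr
  exact Nat.le_succ _

theorem sinh_mul_sinh_le {x y : ℝ} (hx : 0 ≤ x) (hy : 0 ≤ y) :
    sinh x * sinh y ≤ x * y * (cosh x * cosh y) := by
  calc sinh x * sinh y ≤ (x * cosh x) * (y * cosh y) :=
        mul_le_mul (sinh_le_mul_cosh hx) (sinh_le_mul_cosh hy) (sinh_nonneg_iff.2 hy)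
          (by positivity)
    _ = x * y * (cosh x * cosh y) := by ring

theorem cosh_mul_cosh_le_cosh_add {x y : ℝ} (hx : 0 ≤ x) (hy : 0 ≤ y) :
    cosh x * cosh y ≤ cosh (x + y) := by
  rw [cosh_add]
  exact le_add_of_nonneg_right (mul_nonneg (sinh_nonneg_iff.2 hx) (sinh_nonneg_iff.2 hy))

theorem cosh_add_le_mul_exp {x y : ℝ} (hx : 0 ≤ x) (hy : 0 ≤ y) :
    cosh (x + y) ≤ cosh x * cosh y * exp (x * y) := by
  calc cosh (x + y) = cosh x * cosh y + sinh x * sinh y := cosh_add x y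
    _ ≤ cosh x * cosh y * (x * y + 1) := by nlinarith [sinh_mul_sinh_le hx hy]
    _ ≤ cosh x * cosh y * exp (x * y) := by gcongr; exact add_one_le_exp _

theorem one_sub_mul_le_cosh_sub_div {x y : ℝ} (hx : 0 ≤ x) (hy : 0 ≤ y) :
    1 - x * y ≤ cosh (x - y) / (cosh x * cosh y) := by
  rw [le_div_iff₀ (by positivity), cosh_sub]
  nlinarith [sinh_mul_sinh_le hx hy]

theorem cosh_le_exp_abs (x : ℝ) : cosh x ≤ exp |x| := by
  rw [← cosh_abs, cosh_eq]
  linarith [exp_le_exp.2 (neg_le_self (abs_nonneg x))]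

theorem exp_le_two_mul_cosh (x : ℝ) : exp x ≤ 2 * cosh x := by
  rw [cosh_eq]
  linarith [exp_pos (-x)]

section Finset

variable {ι : Type*} (s : Finset ι) (a : ι → ℝ)

theorem prod_cosh_le_cosh_sum (ha : ∀ i ∈ s, 0 ≤ a i) :
    ∏ i ∈ s, cosh (a i) ≤ cosh (∑ i ∈ s, a i) := by
  classical
  induction s using Finset.induction_on with
  | empty => simp
  | insert j s hj ih =>
    rw [prod_insert hj, sum_insert hj]
    have ha' : ∀ i ∈ s, 0 ≤ a i := fun i hi ↦ ha i (mem_insert_of_mem hi)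
    calc cosh (a j) * ∏ i ∈ s, cosh (a i) ≤ cosh (a j) * cosh (∑ i ∈ s, a i) := by
          gcongr; exact ih ha'
      _ ≤ cosh (a j + ∑ i ∈ s, a i) :=
          cosh_mul_cosh_le_cosh_add (ha j (mem_insert_self j s)) (sum_nonneg ha')

theorem prod_cosh_le_exp_sum_sq : ∏ i ∈ s, cosh (a i) ≤ exp (∑ i ∈ s, a i ^ 2 / 2) := by
  rw [exp_sum]
  exact prod_le_prod (fun i _ ↦ (cosh_pos _).le) (fun i _ ↦ cosh_le_exp_half_sq _)

theorem exp_sum_le_two_pow_mul_prod_cosh :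
    exp (∑ i ∈ s, a i) ≤ 2 ^ s.card * ∏ i ∈ s, cosh (a i) := by
  rw [exp_sum, ← prod_const, ← prod_mul_distrib]
  exact prod_le_prod (fun i _ ↦ (exp_pos _).le) (fun i _ ↦ exp_le_two_mul_cosh _)

end Finset

theorem cosh_sum_range_le_prod_mul_exp {a : ℕ → ℝ} (ha : ∀ j, 0 ≤ a j) (m : ℕ) :
    cosh (∑ j ∈ range m, a j) ≤
      (∏ j ∈ range m, cosh (a j)) * exp (∑ j ∈ range m, ∑ i ∈ range j, a i * a j) := by
  induction m with
  | zero => simp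
  | succ m ih =>
    rw [sum_range_succ, prod_range_succ, sum_range_succ, ← sum_mul, exp_add]
    calc cosh (∑ j ∈ range m, a j + a m)
        ≤ cosh (∑ j ∈ range m, a j) * cosh (a m) * exp ((∑ j ∈ range m, a j) * a m) :=
          cosh_add_le_mul_exp (sum_nonneg fun j _ ↦ ha j) (ha m)
      _ ≤ (∏ j ∈ range m, cosh (a j)) * exp (∑ j ∈ range m, ∑ i ∈ range j, a i * a j) *
            cosh (a m) * exp ((∑ j ∈ range m, a j) * a m) := by gcongr
      _ = _ := by ring

theorem sub_one_le_two_pow_mul {X T : ℝ} {p : ℕ} (hp : 1 ≤ p) (hT : 0 ≤ T)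
    (hX₂ : X ≤ 2 ^ p) (hXe : X ≤ exp T) : X - 1 ≤ 2 ^ p * T := by
  have h2p : (2 : ℝ) ≤ 2 ^ p := le_self_pow₀ one_le_two (by omega)
  rcases le_total 1 T with hT1 | hT1
  · nlinarith
  · have hexp : exp T - 1 - T ≤ T ^ 2 :=
      (abs_le.1 (abs_exp_sub_one_sub_id_le (by rwa [abs_of_nonneg hT]))).2
    nlinarith

theorem one_sub_cosh_div_le {a b s Q : ℝ} (ha : 0 ≤ a) (hb : 0 ≤ b) (hs : a - b ≤ |s|)
    (hQ : 0 < Q) (hQb : Q ≤ cosh b) (hQe : Q ≤ exp (a * b / 2)) :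
    1 - cosh s / (cosh a * Q) ≤ a * b := by
  rcases le_total a b with hab | hba
  · have hlog : log (cosh a * Q) ≤ a * b := by
      rw [log_le_iff_le_exp (by positivity)]
      calc cosh a * Q ≤ exp (a ^ 2 / 2) * exp (a * b / 2) :=
            mul_le_mul (cosh_le_exp_half_sq a) hQe hQ.le (exp_pos _).le
        _ ≤ exp (a * b) := by rw [← exp_add]; gcongr; nlinarith
    calc 1 - cosh s / (cosh a * Q) ≤ 1 - (cosh a * Q)⁻¹ := by
          rw [inv_eq_one_div]; gcongr; exact one_le_cosh s
      _ ≤ log (cosh a * Q) := one_sub_inv_le_log_of_pos (by positivity)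
      _ ≤ a * b := hlog
  · have hcosh : cosh (a - b) ≤ cosh s :=
      cosh_le_cosh.2 (by rwa [abs_of_nonneg (sub_nonneg.2 hba)])
    calc 1 - cosh s / (cosh a * Q) ≤ 1 - cosh (a - b) / (cosh a * cosh b) := by gcongr
      _ ≤ a * b := by linarith [one_sub_mul_le_cosh_sub_div ha hb]

section Antitone

variable {p : ℕ} {a : ℕ → ℝ}

theorem sum_range_sum_range_mul_le (ha : ∀ j, 0 ≤ a j)
    (hanti : ∀ j k, j ≤ k → k < p → a k ≤ a j) :
    ∑ j ∈ range p, ∑ i ∈ range j, a i * a j ≤ p ^ 2 * (a 0 * a 1) := by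
  calc ∑ j ∈ range p, ∑ i ∈ range j, a i * a j
      ≤ ∑ j ∈ range p, ∑ i ∈ range j, a 0 * a 1 := by
        refine sum_le_sum fun j hj ↦ sum_le_sum fun i hi ↦ ?_
        rw [mem_range] at hj hi
        exact mul_le_mul (hanti 0 i (Nat.zero_le _) (hi.trans hj)) (hanti 1 j (by omega) hj)
          (ha j) (ha 0)
    _ ≤ ∑ j ∈ range p, (p : ℝ) * (a 0 * a 1) := by
        refine sum_le_sum fun j hj ↦ ?_
        rw [sum_const, card_range, nsmul_eq_mul]
        exact mul_le_mul_of_nonneg_right (mod_cast (mem_range.1 hj).le) (mul_nonneg (ha 0) (ha 1))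
    _ = p ^ 2 * (a 0 * a 1) := by
        rw [sum_const, card_range, nsmul_eq_mul]
        ring

theorem cosh_div_prod_cosh_sub_one_le (ha : ∀ j, 0 ≤ a j)
    (hanti : ∀ j k, j ≤ k → k < p → a k ≤ a j) (hp : 1 ≤ p) {s : ℝ}
    (hs : |s| ≤ ∑ j ∈ range p, a j) :
    cosh s / ∏ j ∈ range p, cosh (a j) - 1 ≤ p ^ 2 * 2 ^ p * (a 0 * a 1) := by
  set P := ∏ j ∈ range p, cosh (a j)
  set T := ∑ j ∈ range p, ∑ i ∈ range j, a i * a j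
  have hP : 0 < P := prod_pos fun j _ ↦ cosh_pos _
  have hcosh : cosh s ≤ cosh (∑ j ∈ range p, a j) :=
    cosh_le_cosh.2 (hs.trans (le_abs_self _))
  have hX₂ : cosh s / P ≤ 2 ^ p := by
    rw [div_le_iff₀ hP]
    calc cosh s ≤ exp |s| := cosh_le_exp_abs s
      _ ≤ exp (∑ j ∈ range p, a j) := exp_le_exp.2 hs
      _ ≤ 2 ^ p * P := by simpa using exp_sum_le_two_pow_mul_prod_cosh (range p) a
  have hXe : cosh s / P ≤ exp T := by
    rw [div_le_iff₀ hP, mul_comm]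
    exact hcosh.trans (cosh_sum_range_le_prod_mul_exp ha p)
  have hT : 0 ≤ T := sum_nonneg fun j _ ↦ sum_nonneg fun i _ ↦ mul_nonneg (ha i) (ha j)
  calc cosh s / P - 1 ≤ 2 ^ p * T := sub_one_le_two_pow_mul hp hT hX₂ hXe
    _ ≤ 2 ^ p * (p ^ 2 * (a 0 * a 1)) := by gcongr; exact sum_range_sum_range_mul_le ha hanti
    _ = p ^ 2 * 2 ^ p * (a 0 * a 1) := by ring

theorem one_sub_cosh_div_prod_cosh_le (ha : ∀ j, 0 ≤ a j)
    (hanti : ∀ j k, j ≤ k → k < p → a k ≤ a j) (hp : 1 ≤ p) {s : ℝ}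
    (hs : a 0 - ∑ j ∈ Ico 1 p, a j ≤ |s|) :
    1 - cosh s / ∏ j ∈ range p, cosh (a j) ≤ p ^ 2 * 2 ^ p * (a 0 * a 1) := by
  set b := ∑ j ∈ Ico 1 p, a j
  set Q := ∏ j ∈ Ico 1 p, cosh (a j)
  have hsplit : ∏ j ∈ range p, cosh (a j) = cosh (a 0) * Q := by
    rw [range_eq_Ico, prod_eq_prod_Ico_succ_bot hp]
  have hQe : Q ≤ exp (a 0 * b / 2) := by
    refine (prod_cosh_le_exp_sum_sq _ a).trans (exp_le_exp.2 ?_)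
    rw [mul_sum, sum_div]
    refine sum_le_sum fun j hj ↦ ?_
    rw [mem_Ico] at hj
    gcongr
    rw [sq]
    exact mul_le_mul_of_nonneg_right (hanti 0 j (Nat.zero_le _) hj.2) (ha j)
  have hb : b ≤ p * a 1 := by
    calc b ≤ ∑ j ∈ Ico 1 p, a 1 :=
          sum_le_sum fun j hj ↦ hanti 1 j (mem_Ico.1 hj).1 (mem_Ico.1 hj).2
      _ ≤ p * a 1 := by
        rw [sum_const, Nat.card_Ico, nsmul_eq_mul]
        gcongr
        · exact ha 1
        · exact_mod_cast Nat.sub_le p 1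
  have hpp : (p : ℝ) ≤ p ^ 2 * 2 ^ p := by
    exact_mod_cast (show p ≤ p ^ 2 * 2 ^ p by nlinarith [Nat.one_le_two_pow (n := p)])
  rw [hsplit]
  calc 1 - cosh s / (cosh (a 0) * Q) ≤ a 0 * b :=
        one_sub_cosh_div_le (ha 0) (sum_nonneg fun j _ ↦ ha j) hs (prod_pos fun j _ ↦ cosh_pos _)
          (prod_cosh_le_cosh_sum _ a fun j _ ↦ ha j) hQe
    _ ≤ a 0 * (p * a 1) := by gcongr; exact ha 0
    _ ≤ p ^ 2 * 2 ^ p * (a 0 * a 1) := by nlinarith [mul_nonneg (ha 0) (ha 1)]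

theorem abs_one_sub_cosh_div_prod_cosh_le (ha : ∀ j, 0 ≤ a j)
    (hanti : ∀ j k, j ≤ k → k < p → a k ≤ a j) (hp : 1 ≤ p) {s : ℝ}
    (hs_le : |s| ≤ ∑ j ∈ range p, a j) (hs_ge : a 0 - ∑ j ∈ Ico 1 p, a j ≤ |s|) :
    |1 - cosh s / ∏ j ∈ range p, cosh (a j)| ≤ p ^ 2 * 2 ^ p * (a 0 * a 1) :=
  abs_le.2 ⟨by linarith [cosh_div_prod_cosh_sub_one_le ha hanti hp hs_le],
    one_sub_cosh_div_prod_cosh_le ha hanti hp hs_ge⟩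

end Antitone

end Real

theorem one_sub_cosh_prod_sech_le_sigma_sq_general (n p : ℕ) (hp : 1 ≤ p)
    (σ : ℝ) (hσ : 0 ≤ σ) (ξ : ℕ → EuclideanSpace ℝ (Fin n))
    (hord : ∀ j k, j ≤ k → k < p → ‖ξ k‖ ≤ ‖ξ j‖) :
    |1 - Real.cosh (σ * ‖∑ j ∈ Finset.range p, ξ j‖) *
        ∏ j ∈ Finset.range p, (Real.cosh (σ * ‖ξ j‖))⁻¹|
      ≤ (p : ℝ) ^ 2 * 2 ^ p * σ ^ 2 * ‖ξ 0‖ * ‖ξ 1‖ := by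
  have hs : |σ * ‖∑ j ∈ range p, ξ j‖| = σ * ‖∑ j ∈ range p, ξ j‖ :=
    abs_of_nonneg (by positivity)
  have hs_le : |σ * ‖∑ j ∈ range p, ξ j‖| ≤ ∑ j ∈ range p, σ * ‖ξ j‖ := by
    rw [hs, ← mul_sum]
    gcongr
    exact norm_sum_le _ _
  have hs_ge : σ * ‖ξ 0‖ - ∑ j ∈ Ico 1 p, σ * ‖ξ j‖ ≤ |σ * ‖∑ j ∈ range p, ξ j‖| := by
    rw [hs, ← mul_sum, ← mul_sub]
    gcongr
    linarith [norm_le_norm_sum_range_add_sum_Ico hp ξ]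
  have key := Real.abs_one_sub_cosh_div_prod_cosh_le (fun j ↦ by positivity)
    (fun j k hjk hk ↦ mul_le_mul_of_nonneg_left (hord j k hjk hk) hσ) hp hs_le hs_ge
  rw [prod_inv_distrib, ← div_eq_mul_inv]
  convert key using 1
  ring

/-- Estimate (coshpest1): if `|ξ₁| ≥ |ξ₂| ≥ ⋯ ≥ |ξ_p|` and `ξ = Σ_{j=1}^p ξ_j`, then
`|1 − cosh(σ|ξ|) ∏_{j=1}^p sech(σ|ξ_j|)| ≤ p² 2^p σ² |ξ₁||ξ₂|`, where `sech r = (cosh r)⁻¹`.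
Here the vectors `ξ₁, …, ξ_p` are `ξ 0, …, ξ (p-1)` for a sequence `ξ : ℕ → ℝⁿ`. -/
theorem one_sub_cosh_prod_sech_le_sigma_sq (n p : ℕ) (hn : 1 ≤ n) (hp : 1 ≤ p)
    (σ : ℝ) (hσ : 0 ≤ σ) (ξ : ℕ → EuclideanSpace ℝ (Fin n))
    (hord : ∀ j k, j ≤ k → k < p → ‖ξ k‖ ≤ ‖ξ j‖) :
    |1 - Real.cosh (σ * ‖∑ j ∈ Finset.range p, ξ j‖) *
        ∏ j ∈ Finset.range p, (Real.cosh (σ * ‖ξ j‖))⁻¹|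
      ≤ (p : ℝ) ^ 2 * 2 ^ p * σ ^ 2 * ‖ξ 0‖ * ‖ξ 1‖ :=
  one_sub_cosh_prod_sech_le_sigma_sq_general n p hp σ hσ ξ hord
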